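/- Let A be an n×n strictly accretive matrix whose numerical range lies in the sector S_α for some α ∈ [0, π/2). Then Re(A⁻¹) ≤ (Re(A))⁻¹ ≤ sec²(α)·Re(A⁻¹) in the Loewner order. -/

import Mathlib

open MeasureTheory Matrix
open scoped ComplexOrder

/-- The "real part" (Hermitian part) of a complex matrix: `(A + Aᴴ)/2`. -/
noncomputable def mre {m : Type*} (A : Matrix m m ℂ) : Matrix m m ℂ :=
  (1/2 : ℂ) • (A + Aᴴ)

/-- A matrix is accretive if its Hermitian part is positive semidefinite. -/
def Accretive {m : Type*} [Fintype m] (A : Matrix m m ℂ) : Prop :=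
  (mre A).PosSemidef

/-- Principal fractional power `A ^ t` of a matrix whose spectrum avoids `(-∞, 0]`,
given (for `0 < t < 1`) by the standard integral formula
`A^t = (sin (tπ)/π) ∫₀^∞ s^(t-1) A (A + s I)⁻¹ ds`. -/
noncomputable def apow {m : Type*} [Fintype m] [DecidableEq m]
    (A : Matrix m m ℂ) (t : ℝ) : Matrix m m ℂ :=
  if t = 0 then 1 else if t = 1 then A else
    Matrix.of fun i j => ∫ s in Set.Ioi (0 : ℝ),
      (((Real.sin (t * Real.pi) / Real.pi) * s ^ (t - 1)) •
        (A * (A + (s : ℂ) • (1 : Matrix m m ℂ))⁻¹)) i j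

/-- The weighted geometric mean `A ♯ₜ B = A^(1/2) (A^(-1/2) B A^(-1/2))^t A^(1/2)`
of (strictly accretive) matrices. -/
noncomputable def gmean {m : Type*} [Fintype m] [DecidableEq m]
    (A : Matrix m m ℂ) (t : ℝ) (B : Matrix m m ℂ) : Matrix m m ℂ :=
  apow A (1/2) * apow ((apow A (1/2))⁻¹ * B * (apow A (1/2))⁻¹) t * apow A (1/2)

/-- The absolute value `|X| = (Xᴴ X)^(1/2)` of a matrix. -/
noncomputable def absM {m : Type*} [Fintype m] [DecidableEq m]
    (X : Matrix m m ℂ) : Matrix m m ℂ :=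
  (Matrix.posSemidef_conjTranspose_mul_self X).1.eigenvectorUnitary.1 *
    diagonal ((↑) ∘ Real.sqrt ∘ (Matrix.posSemidef_conjTranspose_mul_self X).1.eigenvalues) *
    (star (Matrix.posSemidef_conjTranspose_mul_self X).1.eigenvectorUnitary : Matrix m m ℂ)

/-- The `j`-th largest singular value of a complex matrix. -/
noncomputable def singVals {k : ℕ} (T : Matrix (Fin k) (Fin k) ℂ) (j : Fin k) : ℝ :=
  Real.sqrt (((Matrix.posSemidef_conjTranspose_mul_self T).1.eigenvalues ∘
    Tuple.sort (Matrix.posSemidef_conjTranspose_mul_self T).1.eigenvalues) j.rev)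

/-- The `j`-th largest eigenvalue of a Hermitian matrix (junk value `0` otherwise). -/
noncomputable def eigDesc {k : ℕ} (T : Matrix (Fin k) (Fin k) ℂ) (j : Fin k) : ℝ :=
  if h : T.IsHermitian then (h.eigenvalues ∘ Tuple.sort h.eigenvalues) j.rev else 0

/-- The numerical range of `A` lies in the sector
`S_α = {z : Re z ≥ 0, |Im z| ≤ tan α · Re z}`. -/
def InSector {k : ℕ} (α : ℝ) (A : Matrix (Fin k) (Fin k) ℂ) : Prop :=
  ∀ x : EuclideanSpace ℂ (Fin k), ‖x‖ = 1 →
    0 ≤ (star (x : Fin k → ℂ) ⬝ᵥ A.mulVec (x : Fin k → ℂ)).re ∧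
      |(star (x : Fin k → ℂ) ⬝ᵥ A.mulVec (x : Fin k → ℂ)).im| ≤
        Real.tan α * (star (x : Fin k → ℂ) ⬝ᵥ A.mulVec (x : Fin k → ℂ)).re

/-!
Write `A = H + iK` with `H = Re A > 0` and `K = Im A` Hermitian. Then `A H⁻¹ A* = H + K H⁻¹ K`
and `Re (A⁻¹) = A⁻¹ H A⁻*`, so `H⁻¹ - Re (A⁻¹) = A⁻¹ (K H⁻¹ K) A⁻*`, which is positive
semidefinite. The sector condition says exactly `-tan α • H ≤ K ≤ tan α • H`, which forces
`K H⁻¹ K ≤ tan² α • H`; since `sec² α = 1 + tan² α`, this gives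
`sec² α • Re (A⁻¹) - H⁻¹ = A⁻¹ (tan² α • H - K H⁻¹ K) A⁻* ≥ 0`.
-/

open scoped MatrixOrder ComplexStarModule

namespace Matrix

lemma mre_eq_realPart {n : Type*} (A : Matrix n n ℂ) : mre A = ℜ A := by
  rw [mre, realPart_apply_coe, star_eq_conjTranspose, ← Complex.coe_smul]
  norm_num

section QuadraticForm

variable {n : Type*} [Fintype n]

lemma star_dotProduct_conjTranspose_mulVec (A : Matrix n n ℂ) (x : n → ℂ) :
    star x ⬝ᵥ Aᴴ *ᵥ x = star (star x ⬝ᵥ A *ᵥ x) := by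
  rw [star_dotProduct, star_mulVec, conjTranspose_conjTranspose, ← dotProduct_mulVec]

lemma star_dotProduct_realPart_mulVec (A : Matrix n n ℂ) (x : n → ℂ) :
    star x ⬝ᵥ (ℜ A : Matrix n n ℂ) *ᵥ x = ((star x ⬝ᵥ A *ᵥ x).re : ℂ) := by
  rw [realPart_apply_coe, star_eq_conjTranspose, smul_mulVec, dotProduct_smul, add_mulVec,
    dotProduct_add, star_dotProduct_conjTranspose_mulVec, Complex.star_def, Complex.add_conj,
    ← Complex.coe_smul]
  push_cast
  ring

lemma star_dotProduct_imaginaryPart_mulVec (A : Matrix n n ℂ) (x : n → ℂ) :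
    star x ⬝ᵥ (ℑ A : Matrix n n ℂ) *ᵥ x = ((star x ⬝ᵥ A *ᵥ x).im : ℂ) := by
  rw [imaginaryPart_apply_coe, star_eq_conjTranspose, smul_mulVec, smul_mulVec, dotProduct_smul,
    dotProduct_smul, sub_mulVec, dotProduct_sub, star_dotProduct_conjTranspose_mulVec,
    Complex.star_def, Complex.sub_conj, ← Complex.coe_smul]
  push_cast
  ring_nf
  simp

lemma isUnit_of_posDef_realPart [DecidableEq n] {A : Matrix n n ℂ}
    (hA : (ℜ A : Matrix n n ℂ).PosDef) : IsUnit A := by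
  rw [isUnit_iff_isUnit_det, isUnit_iff_ne_zero]
  intro hdet
  obtain ⟨v, hv, hAv⟩ := exists_mulVec_eq_zero_iff.mpr hdet
  have := hA.dotProduct_mulVec_pos hv
  rw [star_dotProduct_realPart_mulVec, hAv, dotProduct_zero, Complex.zero_re,
    Complex.ofReal_zero] at this
  exact this.false

lemma imaginaryPart_mem_Icc_of_abs_im_le {A : Matrix n n ℂ} {t : ℝ}
    (h : ∀ x : n → ℂ, |(star x ⬝ᵥ A *ᵥ x).im| ≤ t * (star x ⬝ᵥ A *ᵥ x).re) :
    (ℑ A : Matrix n n ℂ) ∈ Set.Icc (-(t • (ℜ A : Matrix n n ℂ))) (t • (ℜ A : Matrix n n ℂ)) := by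
  have hform (s : ℝ) (x : n → ℂ) :
      star x ⬝ᵥ (t • (ℜ A : Matrix n n ℂ) + s • (ℑ A : Matrix n n ℂ)) *ᵥ x =
        ((t * (star x ⬝ᵥ A *ᵥ x).re + s * (star x ⬝ᵥ A *ᵥ x).im : ℝ) : ℂ) := by
    rw [add_mulVec, smul_mulVec, smul_mulVec, dotProduct_add, dotProduct_smul, dotProduct_smul,
      star_dotProduct_realPart_mulVec, star_dotProduct_imaginaryPart_mulVec]
    push_cast
    simp only [Complex.real_smul]
  have hnonneg (s : ℝ) (hs : |s| = 1) :
      0 ≤ t • (ℜ A : Matrix n n ℂ) + s • (ℑ A : Matrix n n ℂ) := by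
    refine (PosSemidef.of_dotProduct_mulVec_nonneg ?_ fun x ↦ ?_).nonneg
    · exact ((IsSelfAdjoint.all t).smul (ℜ A).2).add ((IsSelfAdjoint.all s).smul (ℑ A).2)
    · rw [hform, Complex.zero_le_real]
      have hsx : |s * (star x ⬝ᵥ A *ᵥ x).im| ≤ t * (star x ⬝ᵥ A *ᵥ x).re := by
        rw [abs_mul, hs, one_mul]
        exact h x
      linarith [neg_abs_le (s * (star x ⬝ᵥ A *ᵥ x).im)]
  constructor
  · rw [← sub_nonneg, sub_neg_eq_add, add_comm]
    simpa using hnonneg 1 (by simp)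
  · rw [← sub_nonneg, sub_eq_add_neg]
    simpa using hnonneg (-1) (by simp)

end QuadraticForm

variable {n : Type*} [Fintype n] [DecidableEq n]

/-- For `M = H^{-1/2} K H^{-1/2}` this is `-t ≤ M ≤ t → M² ≤ t²`; the proof avoids square roots
by writing `2t • (t² • H - K H⁻¹ K)` as a sum of conjugates of `t • H + K` and `t • H - K`. -/
lemma mul_inv_mul_le_sq_smul {𝕜 : Type*} [RCLike 𝕜] {H K : Matrix n n 𝕜} (hH : IsUnit H)
    {t : ℝ} (ht : 0 ≤ t) (hK : K ∈ Set.Icc (-(t • H)) (t • H)) : K * H⁻¹ * K ≤ t ^ 2 • H := by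
  rcases ht.eq_or_lt with rfl | ht
  · obtain rfl : K = 0 := le_antisymm (by simpa using hK.2) (by simpa using hK.1)
    simp
  have hHH : H * H⁻¹ = 1 := mul_nonsing_inv H ((isUnit_iff_isUnit_det H).mp hH)
  set S := t ^ 2 • H - K * H⁻¹ * K
  have hplus : (t • H + K) * (t • 1 - H⁻¹ * K) = S := by
    simp only [mul_sub, add_mul, smul_mul_assoc, mul_smul_comm, one_mul, mul_one, ← mul_assoc,
      hHH, S, sq]
    module
  have hminus : (t • H - K) * (t • 1 + H⁻¹ * K) = S := by
    simp only [mul_add, sub_mul, smul_mul_assoc, mul_smul_comm, one_mul, mul_one, ← mul_assoc,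
      hHH, S, sq]
    module
  have hsum : star (t • 1 - H⁻¹ * K) * (t • H + K) * (t • 1 - H⁻¹ * K) +
      star (t • 1 + H⁻¹ * K) * (t • H - K) * (t • 1 + H⁻¹ * K) = (2 * t) • S := by
    rw [mul_assoc, mul_assoc, hplus, hminus, ← add_mul, star_sub, star_add, star_smul, star_one,
      star_trivial, sub_add_add_cancel, ← two_smul ℝ, smul_smul, smul_mul_assoc, one_mul]
  have hplus_nonneg : 0 ≤ t • H + K := by
    simpa [sub_neg_eq_add, add_comm] using sub_nonneg.mpr hK.1
  have hS : 0 ≤ (2 * t) • S := hsum ▸ add_nonneg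
    (star_left_conjugate_nonneg hplus_nonneg _) (star_left_conjugate_nonneg (sub_nonneg.mpr hK.2) _)
  have := hS.posSemidef.smul (inv_nonneg.mpr (by positivity : (0 : ℝ) ≤ 2 * t))
  rw [smul_smul, inv_mul_cancel₀ (by positivity), one_smul] at this
  exact sub_nonneg.mp this.nonneg

lemma realPart_inv {A : Matrix n n ℂ} (hA : IsUnit A) :
    (ℜ A⁻¹ : Matrix n n ℂ) = A⁻¹ * (ℜ A : Matrix n n ℂ) * star A⁻¹ := by
  have h₁ : A⁻¹ * A = 1 := nonsing_inv_mul A ((isUnit_iff_isUnit_det A).mp hA)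
  have h₂ : star A * star A⁻¹ = 1 := by rw [← star_mul, h₁, star_one]
  rw [realPart_apply_coe, realPart_apply_coe, mul_smul_comm, smul_mul_assoc, mul_add, add_mul,
    h₁, one_mul, mul_assoc, h₂, mul_one, add_comm (star A⁻¹)]

lemma mul_inv_realPart_mul_star {A : Matrix n n ℂ} (hH : IsUnit (ℜ A : Matrix n n ℂ)) :
    A * (ℜ A : Matrix n n ℂ)⁻¹ * star A =
      ℜ A + ℑ A * (ℜ A : Matrix n n ℂ)⁻¹ * ℑ A := by
  set H : Matrix n n ℂ := ↑(ℜ A)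
  set K : Matrix n n ℂ := ↑(ℑ A)
  have hd := (isUnit_iff_isUnit_det H).mp hH
  have hA : A = H + Complex.I • K := (realPart_add_I_smul_imaginaryPart A).symm
  have hA' : star A = H - Complex.I • K := by
    rw [hA, star_add, star_smul, (ℜ A).2.star_eq, (ℑ A).2.star_eq, Complex.star_def,
      Complex.conj_I, neg_smul, sub_eq_add_neg]
  rw [hA', hA]
  simp only [add_mul, mul_sub, smul_mul_assoc, mul_smul_comm, mul_nonsing_inv H hd, one_mul,
    mul_assoc K, nonsing_inv_mul H hd, mul_one]
  match_scalars <;> simp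

lemma inv_realPart_eq {A : Matrix n n ℂ} (hA : IsUnit A) (hH : IsUnit (ℜ A : Matrix n n ℂ)) :
    (ℜ A : Matrix n n ℂ)⁻¹ =
      ℜ A⁻¹ + A⁻¹ * (ℑ A * (ℜ A : Matrix n n ℂ)⁻¹ * ℑ A) * star A⁻¹ := by
  have h₁ : A⁻¹ * A = 1 := nonsing_inv_mul A ((isUnit_iff_isUnit_det A).mp hA)
  have h₂ : star A * star A⁻¹ = 1 := by rw [← star_mul, h₁, star_one]
  calc (ℜ A : Matrix n n ℂ)⁻¹
      = A⁻¹ * (A * (ℜ A : Matrix n n ℂ)⁻¹ * star A) * star A⁻¹ := by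
        simp only [← mul_assoc, h₁, one_mul]
        rw [mul_assoc _ (star A), h₂, mul_one]
    _ = _ := by rw [mul_inv_realPart_mul_star hH, mul_add, add_mul, ← realPart_inv hA]

lemma realPart_inv_le_inv_realPart {A : Matrix n n ℂ} (hH : (ℜ A : Matrix n n ℂ).PosDef) :
    (ℜ A⁻¹ : Matrix n n ℂ) ≤ (ℜ A : Matrix n n ℂ)⁻¹ := by
  rw [inv_realPart_eq (isUnit_of_posDef_realPart hH) hH.isUnit]
  refine le_add_of_nonneg_right (star_right_conjugate_nonneg ?_ _)
  simpa only [(ℑ A).2.star_eq] using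
    star_left_conjugate_nonneg hH.inv.posSemidef.nonneg (ℑ A : Matrix n n ℂ)

lemma inv_realPart_le_smul_realPart_inv {A : Matrix n n ℂ} (hH : (ℜ A : Matrix n n ℂ).PosDef)
    {t : ℝ} (ht : 0 ≤ t)
    (hK : (ℑ A : Matrix n n ℂ) ∈ Set.Icc (-(t • (ℜ A : Matrix n n ℂ))) (t • (ℜ A : Matrix n n ℂ))) :
    (ℜ A : Matrix n n ℂ)⁻¹ ≤ (1 + t ^ 2) • (ℜ A⁻¹ : Matrix n n ℂ) := by
  have hA := isUnit_of_posDef_realPart hH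
  rw [inv_realPart_eq hA hH.isUnit, add_smul, one_smul, add_le_add_iff_left, realPart_inv hA,
    ← smul_mul_assoc, ← mul_smul_comm]
  exact star_right_conjugate_le_conjugate (mul_inv_mul_le_sq_smul hH.isUnit ht hK) _

end Matrix

lemma InSector.abs_im_le {k : ℕ} {α : ℝ} {A : Matrix (Fin k) (Fin k) ℂ} (h : InSector α A)
    (v : Fin k → ℂ) : |(star v ⬝ᵥ A *ᵥ v).im| ≤ Real.tan α * (star v ⬝ᵥ A *ᵥ v).re := by
  rcases eq_or_ne v 0 with rfl | hv
  · simp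
  set c : ℝ := ‖WithLp.toLp 2 v‖
  have hc : 0 < c := norm_pos_iff.mpr (by simpa using hv)
  have hunit : ‖c⁻¹ • WithLp.toLp 2 v‖ = 1 := by
    rw [norm_smul, Real.norm_eq_abs, abs_inv, abs_of_pos hc, inv_mul_cancel₀ hc.ne']
  have hscaled := (h _ hunit).2
  simp only [WithLp.ofLp_smul, star_smul, star_trivial, mulVec_smul, smul_dotProduct,
    dotProduct_smul, Complex.smul_re, Complex.smul_im, smul_eq_mul, abs_mul,
    abs_of_pos (inv_pos.mpr hc)] at hscaled
  have hc2 : 0 < c⁻¹ * c⁻¹ := by positivity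
  nlinarith

/-- If `A` is strictly accretive with numerical range in `S_α`, then
`Re (A⁻¹) ≤ (Re A)⁻¹ ≤ sec² α · Re (A⁻¹)` in the Loewner order. -/
theorem stmt4 {n : ℕ} (α : ℝ) (hα₀ : 0 ≤ α) (hα₁ : α < Real.pi / 2)
    (A : Matrix (Fin n) (Fin n) ℂ) (hA : (mre A).PosDef) (hAsec : InSector α A) :
    ((mre A)⁻¹ - mre A⁻¹).PosSemidef ∧
      ((((Real.cos α)⁻¹ ^ 2 : ℝ) : ℂ) • mre A⁻¹ - (mre A)⁻¹).PosSemidef := by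
  have hcos : Real.cos α ≠ 0 :=
    (Real.cos_pos_of_mem_Ioo ⟨by linarith [Real.pi_pos], hα₁⟩).ne'
  have hsec : (Real.cos α)⁻¹ ^ 2 = 1 + Real.tan α ^ 2 := by
    rw [inv_pow, ← Real.inv_one_add_tan_sq hcos, inv_inv]
  rw [mre_eq_realPart] at hA
  rw [mre_eq_realPart, mre_eq_realPart, hsec, Complex.coe_smul]
  exact ⟨Matrix.realPart_inv_le_inv_realPart hA,
    Matrix.inv_realPart_le_smul_realPart_inv hA
      (Real.tan_nonneg_of_nonneg_of_le_pi_div_two hα₀ hα₁.le)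
      (Matrix.imaginaryPart_mem_Icc_of_abs_im_le hAsec.abs_im_le)⟩
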